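/- arXiv:2211.13118 — 6 statements merged into one kernel-verified Lean document; each statement's English description precedes it below -/
import Mathlib

section
/- Let V be a type with an adjacency relation A : V → V → Prop and an arc-weight function w : V → V → ℝ. Fix vertices r, u₁ ∈ V, two finite sets L_d, L_p of vertices, functions V₂ : V → ℝ and ub : V → ℝ, a real number v̄, and a function m : V → ℝ such that for every u₂ ∈ L_d ∪ L_p, every path q from u₁ to u₂ satisfies value(q) ≤ m(u₂). Let p₁ be a path from r to u₁ such that value(p₁) ≤ V₂(u₂) − m(u₂) for every u₂ ∈ L_d and value(p₁) ≤ v̄ − ub(u₂) − m(u₂) for every u₂ ∈ L_p (equivalently, value(p₁) is at most the minimum of all individual dominance and pruning thresholds). Then every extension of p₁ into the leaves is weakly dominated or pruned: for every u₂ ∈ L_d and every path q from u₁ to u₂, value(p₁ · q) ≤ V₂(u₂); and for every u₂ ∈ L_p and every path q from u₁ to u₂, value(p₁ · q) + ub(u₂) ≤ v̄. -/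
/-- A path from `u` to `v` in the directed graph with adjacency `A`. -/
def IsPath {V : Type*} (A : V → V → Prop) (u v : V) (p : List V) : Prop :=
  p ≠ [] ∧ p.head? = some u ∧ p.getLast? = some v ∧ List.Chain' A p

/-- The value of a path: sum of arc weights over consecutive pairs. -/
def pathValue {V : Type*} (w : V → V → ℝ) (p : List V) : ℝ :=
  ((p.zip p.tail).map fun x => w x.1 x.2).sum


lemma pathValue_append {V : Type*} (w : V → V → ℝ) (p q : List V) (u : V)
    (hp : p.getLast? = some u) (hq : q.head? = some u) :
    pathValue w (p ++ q.tail) = pathValue w p + pathValue w q := by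
  unfold pathValue
  induction p with
  | nil => simp at hp
  | cons a l ih =>
    cases l with
    | nil =>
      simp [List.getLast?] at hp
      subst hp
      cases q with
      | nil => simp at hq
      | cons b t =>
        simp at hq; subst hq
        simp
    | cons b l' =>
      have := ih (by simpa [List.getLast?_cons_cons] using hp)
      simp only [List.cons_append, List.tail_cons, List.zip_cons_cons, List.map_cons,
        List.sum_cons] at *
      rw [this]
      ring

/-- Proposition on expansion thresholds: if the value of a prefix path `p₁` is
at most every individual dominance threshold `V₂(u₂) − m(u₂)` (for `u₂` in the
dominance leaves `Ld`) and every individual pruning threshold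
`v̄ − ub(u₂) − m(u₂)` (for `u₂` in the pruned leaves `Lp`), then every extension
of `p₁` into the leaves is weakly dominated or pruned. -/
theorem expansion_threshold_prune {V : Type*} [DecidableEq V] (A : V → V → Prop) (w : V → V → ℝ)
    (r u₁ : V) (Ld Lp : Finset V) (V₂ ub : V → ℝ) (vbar : ℝ) (m : V → ℝ)
    (hm : ∀ u₂ ∈ Ld ∪ Lp, ∀ q, IsPath A u₁ u₂ q → pathValue w q ≤ m u₂)
    (p₁ : List V) (hp₁ : IsPath A r u₁ p₁)
    (hd : ∀ u₂ ∈ Ld, pathValue w p₁ ≤ V₂ u₂ - m u₂)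
    (hp : ∀ u₂ ∈ Lp, pathValue w p₁ ≤ vbar - ub u₂ - m u₂) :
    (∀ u₂ ∈ Ld, ∀ q, IsPath A u₁ u₂ q → pathValue w (p₁ ++ q.tail) ≤ V₂ u₂) ∧
    (∀ u₂ ∈ Lp, ∀ q, IsPath A u₁ u₂ q → pathValue w (p₁ ++ q.tail) + ub u₂ ≤ vbar) := by
  have key : ∀ u₂, ∀ q, IsPath A u₁ u₂ q →
      pathValue w (p₁ ++ q.tail) = pathValue w p₁ + pathValue w q := by
    intro u₂ q hq
    exact pathValue_append w p₁ q u₁ hp₁.2.2.1 hq.2.1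
  constructor
  · intro u₂ hu₂ q hq
    rw [key u₂ q hq]
    have h1 := hd u₂ hu₂
    have h2 := hm u₂ (Finset.mem_union_left _ hu₂) q hq
    linarith
  · intro u₂ hu₂ q hq
    rw [key u₂ q hq]
    have h1 := hp u₂ hu₂
    have h2 := hm u₂ (Finset.mem_union_right _ hu₂) q hq
    linarith
end

section
/- Let V be a type with an adjacency relation A : V → V → Prop and an arc-weight function w : V → V → ℝ. Fix a target vertex t ∈ V and, for each u ∈ V, let S(u) ⊆ ℝ be the set of values of paths from u to t. Then for every u ≠ t, the supremum in the extended reals EReal satisfies: sSup (coe '' S(u)) = ⨆ over vertices u' with A u u' of ((w u u' : EReal) + sSup (coe '' S(u'))), where the supremum of the empty set is ⊥ (= −∞). Consequently, the local-bound values ℓ(u) := sSup (coe '' S(u)) are characterized by ℓ(t) ≥ 0 with 0 ∈ S(t), ℓ(u) = ⊥ exactly when no u→t path exists, and the backward (bottom-up) recursion above for u ≠ t. -/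
/-- The set of values of paths from `u` to the target `t`. -/
def pathValuesTo {V : Type*} (A : V → V → Prop) (w : V → V → ℝ) (t u : V) : Set ℝ :=
  {x | ∃ p, IsPath A u t p ∧ pathValue w p = x}

/-!
A path from `u ≠ t` to `t` has at least one arc, so it is an arc `u → u'` followed by a
path from `u'` to `t`, and its value is `w u u'` plus the value of the rest. Hence the set of
values `S(u)` is the union over the out-neighbours `u'` of the translates `w u u' + S(u')`, and
the recursion follows because `sSup` commutes with unions and, in `EReal`, with translation by a
real number, which is an order automorphism of `EReal` (so the empty case correctly gives `⊥`).
-/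

namespace EReal

theorem coe_neg_add_coe_add (c : ℝ) (x : EReal) : ((-c : ℝ) : EReal) + ((c : EReal) + x) = x := by
  rw [← add_assoc, ← coe_add, neg_add_cancel, coe_zero, zero_add]

noncomputable def addLeftOrderIso (c : ℝ) : EReal ≃o EReal :=
  Equiv.toOrderIso
    { toFun := ((c : EReal) + ·)
      invFun := (((-c : ℝ) : EReal) + ·)
      left_inv := coe_neg_add_coe_add c
      right_inv := fun x => by simpa using coe_neg_add_coe_add (-c) x }
    (fun _ _ h => add_le_add_right h (c : EReal))
    (fun _ _ h => add_le_add_right h ((-c : ℝ) : EReal))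

theorem addLeftOrderIso_apply (c : ℝ) (x : EReal) : addLeftOrderIso c x = c + x := rfl

theorem sSup_image_coe_add (c : ℝ) (S : Set ℝ) :
    sSup (Real.toEReal '' ((c + ·) '' S)) = c + sSup (Real.toEReal '' S) := by
  calc sSup (Real.toEReal '' ((c + ·) '' S))
      = sSup (addLeftOrderIso c '' (Real.toEReal '' S)) := by
        simp only [Set.image_image, coe_add, addLeftOrderIso_apply]
    _ = c + sSup (Real.toEReal '' S) := by
        rw [sSup_image, ← OrderIso.map_sSup, addLeftOrderIso_apply]

theorem sSup_image_coe_eq_bot_iff (S : Set ℝ) : sSup (Real.toEReal '' S) = ⊥ ↔ S = ∅ := by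
  simp [sSup_eq_bot, Set.eq_empty_iff_forall_notMem]

end EReal

section Paths

variable {V : Type*} {A : V → V → Prop} {u v a b : V} {r : List V}

theorem isPath_singleton_self (A : V → V → Prop) (u : V) : IsPath A u u [u] :=
  ⟨List.cons_ne_nil _ _, rfl, rfl, List.isChain_singleton _⟩

theorem IsPath.eq_of_singleton (h : IsPath A u v [a]) : u = v := by
  obtain ⟨-, hu, hv, -⟩ := h
  simp_all

theorem isPath_cons_cons :
    IsPath A u v (a :: b :: r) ↔ a = u ∧ A u b ∧ IsPath A b v (b :: r) := by
  constructor
  · rintro ⟨-, hu, hv, hchain⟩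
    obtain rfl : a = u := Option.some_injective _ hu
    obtain ⟨hab, hr⟩ := List.isChain_cons_cons.1 hchain
    exact ⟨rfl, hab, List.cons_ne_nil _ _, rfl, hv, hr⟩
  · rintro ⟨rfl, hab, -, -, hv, hr⟩
    exact ⟨List.cons_ne_nil _ _, rfl, hv, List.isChain_cons_cons.2 ⟨hab, hr⟩⟩

theorem pathValue_singleton (w : V → V → ℝ) (a : V) : pathValue w [a] = 0 := by
  simp [pathValue]

theorem pathValue_cons_cons (w : V → V → ℝ) (a b : V) (r : List V) :
    pathValue w (a :: b :: r) = w a b + pathValue w (b :: r) := by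
  simp [pathValue]

theorem pathValuesTo_eq_empty_iff (w : V → V → ℝ) (t u : V) :
    pathValuesTo A w t u = ∅ ↔ ¬ ∃ p, IsPath A u t p := by
  simp [pathValuesTo, Set.eq_empty_iff_forall_notMem]

theorem pathValuesTo_eq_iUnion (w : V → V → ℝ) {t u : V} (hu : u ≠ t) :
    pathValuesTo A w t u = ⋃ v : {v // A u v}, (w u v + ·) '' pathValuesTo A w t v := by
  ext x
  simp only [Set.mem_iUnion, Set.mem_image, pathValuesTo, Set.mem_ofPred_eq, Subtype.exists]
  constructor
  · rintro ⟨p, hp, rfl⟩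
    match p, hp with
    | [], hp => exact absurd rfl hp.1
    | [_], hp => exact absurd hp.eq_of_singleton hu
    | _ :: b :: r, hp =>
      obtain ⟨rfl, hub, hb⟩ := isPath_cons_cons.1 hp
      exact ⟨b, hub, _, ⟨b :: r, hb, rfl⟩, (pathValue_cons_cons w _ b r).symm⟩
  · rintro ⟨v, huv, _, ⟨q, hq, rfl⟩, rfl⟩
    match q, hq with
    | b :: r, hq =>
      obtain rfl : b = v := Option.some_injective _ hq.2.1
      exact ⟨u :: b :: r, isPath_cons_cons.2 ⟨rfl, huv, hq⟩, pathValue_cons_cons w u b r⟩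

end Paths

/-- Correctness of the bottom-up local-bound computation: the local bound
`ℓ(u) = sSup` (in `EReal`) of the values of `u→t` paths satisfies `0 ∈ S(t)`
(hence `ℓ(t) ≥ 0`), equals `⊥` exactly when no `u→t` path exists, and, for
`u ≠ t`, satisfies the backward recursion over the out-neighbors of `u`. -/
theorem local_bound_recursion {V : Type*} (A : V → V → Prop) (w : V → V → ℝ) (t : V) :
    (0 ∈ pathValuesTo A w t t) ∧
    ((0 : EReal) ≤ sSup (Real.toEReal '' pathValuesTo A w t t)) ∧
    (∀ u, sSup (Real.toEReal '' pathValuesTo A w t u) = ⊥ ↔ ¬ ∃ p, IsPath A u t p) ∧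
    (∀ u, u ≠ t →
      sSup (Real.toEReal '' pathValuesTo A w t u) =
        ⨆ u' : {u' // A u u'}, ((w u u' : EReal) +
          sSup (Real.toEReal '' pathValuesTo A w t u'))) := by
  have zero_mem : 0 ∈ pathValuesTo A w t t :=
    ⟨[t], isPath_singleton_self A t, pathValue_singleton w t⟩
  refine ⟨zero_mem, le_sSup ⟨0, zero_mem, rfl⟩, fun u => ?_, fun u hu => ?_⟩
  · rw [EReal.sSup_image_coe_eq_bot_iff, pathValuesTo_eq_empty_iff]
  · simp only [pathValuesTo_eq_iUnion w hu, Set.image_iUnion, sSup_iUnion,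
      EReal.sSup_image_coe_add]
end

section
/- Let n be a natural number and c, l : Fin n → ℝ. For a permutation σ of Fin n define F(σ) := Σ over k of c(σ k) · (Σ over m < k of l(σ m)). Suppose σ is ordered by non-increasing ratio in the sense that for all positions k ≤ k', c(σ k) · l(σ k') ≥ c(σ k') · l(σ k), and suppose l is nonnegative and c is nonnegative. Then F(σ) ≤ F(τ) for every permutation τ of Fin n; i.e., ordering the items by decreasing cut-to-length ratio minimizes F. -/
open Finset

section Helpers
variable {n : ℕ}

private def S (n : ℕ) : Finset (Fin n × Fin n) :=
  (univ ×ˢ univ).filter (fun p => p.1 < p.2)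

private lemma expand_sum (f : Fin n → Fin n → ℝ) :
    ∑ k, ∑ m ∈ Iio k, f m k = ∑ p ∈ S n, f p.1 p.2 := by
  rw [S, Finset.sum_filter, Finset.sum_product, Finset.sum_comm]
  apply Finset.sum_congr rfl
  intro k _
  rw [← Finset.sum_filter]
  apply Finset.sum_congr _ (fun _ _ => rfl)
  ext m; simp

private lemma offDiag_perm (h : Fin n → Fin n → ℝ) (π : Equiv.Perm (Fin n)) :
    ∑ p ∈ univ.offDiag, h (π p.1) (π p.2) = ∑ p ∈ univ.offDiag, h p.1 p.2 := by
  apply Finset.sum_nbij' (i := fun p => (π p.1, π p.2))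
    (j := fun p => (π⁻¹ p.1, π⁻¹ p.2)) <;>
    simp [Finset.mem_offDiag, sub_eq_zero, π.injective.ne_iff]

private lemma offDiag_eq_twice (h : Fin n → Fin n → ℝ)
    (hs : ∀ a b, h a b = h b a) :
    ∑ p ∈ univ.offDiag, h p.1 p.2 = 2 * ∑ p ∈ S n, h p.1 p.2 := by
  rw [← Finset.sum_filter_add_sum_filter_not (univ.offDiag) (fun p => p.1 < p.2)]
  have h1 : (univ.offDiag).filter (fun p : Fin n × Fin n => p.1 < p.2) = S n := by
    ext p
    simp only [S, Finset.mem_filter, Finset.mem_offDiag, Finset.mem_univ,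
      Finset.mem_product, true_and, and_true]
    exact ⟨fun h => h.2, fun h => ⟨h.ne, h⟩⟩
  have h2 : ∑ p ∈ (univ.offDiag).filter (fun p : Fin n × Fin n => ¬ p.1 < p.2),
      h p.1 p.2 = ∑ p ∈ S n, h p.1 p.2 := by
    apply Finset.sum_nbij' (i := fun p => (p.2, p.1)) (j := fun p => (p.2, p.1))
    · intro p hp
      simp [Finset.mem_offDiag, S] at hp ⊢
      exact lt_of_le_of_ne hp.2 (fun e => hp.1 e.symm)
    · intro p hp
      simp [Finset.mem_offDiag, S] at hp ⊢
      exact ⟨fun e => hp.ne' e, hp.le⟩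
    · simp
    · simp
    · intro p hp; exact hs p.1 p.2
  rw [h1, h2]; ring

private lemma S_perm_invariant (h : Fin n → Fin n → ℝ)
    (hs : ∀ a b, h a b = h b a) (π : Equiv.Perm (Fin n)) :
    ∑ p ∈ S n, h (π p.1) (π p.2) = ∑ p ∈ S n, h p.1 p.2 := by
  have key := offDiag_perm h π
  rw [offDiag_eq_twice h hs] at key
  rw [offDiag_eq_twice (fun a b => h (π a) (π b)) (fun a b => hs _ _)] at key
  linarith

end Helpers

/-- Simmons' first-generation bound / ratio rule: with nonnegative cut values
`c` and lengths `l`, a permutation `σ` ordered by non-increasing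
cut-to-length ratio (cross-product condition) minimizes
`F(τ) = Σ_k c(τ k) · Σ_{m<k} l(τ m)` over all permutations `τ`. -/
theorem ratio_ordering_minimizes (n : ℕ) (c l : Fin n → ℝ)
    (hc : ∀ i, 0 ≤ c i) (hl : ∀ i, 0 ≤ l i)
    (σ : Equiv.Perm (Fin n))
    (hσ : ∀ k k' : Fin n, k ≤ k' → c (σ k') * l (σ k) ≤ c (σ k) * l (σ k')) :
    ∀ τ : Equiv.Perm (Fin n),
      ∑ k, c (σ k) * ∑ m ∈ Iio k, l (σ m) ≤
        ∑ k, c (τ k) * ∑ m ∈ Iio k, l (τ m) := by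
  intro τ
  set M : Fin n → Fin n → ℝ := fun a b => min (c b * l a) (c a * l b) with hM
  have hMs : ∀ a b, M a b = M b a := fun a b => min_comm _ _
  have eσ : ∀ π : Equiv.Perm (Fin n), ∑ k, c (π k) * ∑ m ∈ Iio k, l (π m)
      = ∑ p ∈ S n, c (π p.2) * l (π p.1) := by
    intro π
    rw [← expand_sum (fun m k => c (π k) * l (π m))]
    simp [Finset.mul_sum]
  rw [eσ σ, eσ τ]
  have h1 : ∑ p ∈ S n, c (σ p.2) * l (σ p.1) = ∑ p ∈ S n, M (σ p.1) (σ p.2) := by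
    apply Finset.sum_congr rfl
    intro p hp
    simp only [S, Finset.mem_filter] at hp
    exact (min_eq_left (hσ p.1 p.2 hp.2.le)).symm
  rw [h1, S_perm_invariant M hMs σ, ← S_perm_invariant M hMs τ]
  apply Finset.sum_le_sum
  intro p hp
  exact min_le_left _ _
end

section
/- Let α be a finite type with decidable equality, D : α → α → ℝ a distance matrix, m ≥ 1 a natural number, and v : Fin (m+1) → α an injective function (a walk visiting distinct locations v 0, v 1, …, v m). Let M be the finite set {v k : 1 ≤ k ≤ m}. Then Σ over k from 0 to m−1 of D (v k) (v (k+1)) ≥ Σ over i ∈ M of (the minimum over j ∈ univ.erase i of D j i). -/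
open Finset

/-- Rough lower bound for the TSPTW: the distance covered by a walk visiting
distinct locations `v 0, …, v m` is at least the sum, over each visited
customer `i ∈ M = {v k : 1 ≤ k ≤ m}`, of the cheapest incoming edge `D j i`
with `j ≠ i`. -/
theorem tsptw_cheapest_edge_bound {α : Type*} [Fintype α] [DecidableEq α]
    (D : α → α → ℝ) (m : ℕ) (hm : 1 ≤ m)
    (v : Fin (m + 1) → α) (hv : Function.Injective v)
    (M : Finset α)
    (hM : M = (univ.filter (fun k : Fin (m + 1) => 1 ≤ (k : ℕ))).image v) :
    ∑ i ∈ M, (univ.erase i).inf'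
        (by
          have h := Fintype.card_le_of_injective v hv
          simp only [Fintype.card_fin] at h
          rw [← Finset.card_pos, Finset.card_erase_of_mem (Finset.mem_univ i),
            Finset.card_univ]
          omega)
        (fun j => D j i)
      ≤ ∑ k : Fin m, D (v k.castSucc) (v k.succ) := by
  have hfilt : (univ.filter (fun k : Fin (m + 1) => 1 ≤ (k : ℕ)))
      = univ.image Fin.succ := by
    ext k
    simp only [mem_filter, mem_univ, true_and, mem_image]
    constructor
    · intro hk
      rcases Fin.eq_zero_or_eq_succ k with rfl | ⟨j, rfl⟩
      · simp at hk
      · exact ⟨j, rfl⟩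
    · rintro ⟨j, rfl⟩
      simp [Fin.val_succ]
  rw [hM, hfilt, sum_image (fun a _ b _ h => hv h),
    sum_image (fun a _ b _ h => Fin.succ_injective _ h)]
  apply sum_le_sum
  intro k _
  apply inf'_le
  rw [mem_erase]
  refine ⟨fun h => ?_, mem_univ _⟩
  have := hv h
  have h2 : (k.castSucc : ℕ) = (k.succ : ℕ) := congrArg Fin.val this
  simp [Fin.val_succ] at h2
end

section
/- Let n be a natural number and w, v, q : Fin n → ℕ (weights, values, and quantities of n item types) and let Opt(j, s), for j ≤ n and s : ℕ, denote the maximum of Σ over k with j ≤ k < n of x k * v k over all x : Fin n → ℕ satisfying x k ≤ q k for all k with j ≤ k < n and Σ over k with j ≤ k < n of x k * w k ≤ s. Then Opt satisfies the Bellman recursion of the bounded knapsack dynamic program: Opt(n, s) = 0 for all s, and for every j < n and every s, Opt(j, s) = max over d ∈ ℕ with d ≤ q j and d * w j ≤ s of (d * v j + Opt(j+1, s − d * w j)). -/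
open Finset

/-- `knapsackOpt n w v q j s` is the maximum of `Σ_{j ≤ k < n} x k * v k` over
all `x : Fin n → ℕ` with `x k ≤ q k` for `j ≤ k < n` and
`Σ_{j ≤ k < n} x k * w k ≤ s`. -/
noncomputable def knapsackOpt (n : ℕ) (w v q : Fin n → ℕ) (j s : ℕ) : ℕ :=
  sSup {val | ∃ x : Fin n → ℕ,
    (∀ k : Fin n, j ≤ (k : ℕ) → x k ≤ q k) ∧
    (∑ k ∈ univ.filter (fun k : Fin n => j ≤ (k : ℕ)), x k * w k) ≤ s ∧
    val = ∑ k ∈ univ.filter (fun k : Fin n => j ≤ (k : ℕ)), x k * v k}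

def kSet (n : ℕ) (w v q : Fin n → ℕ) (j s : ℕ) : Set ℕ :=
  {val | ∃ x : Fin n → ℕ,
    (∀ k : Fin n, j ≤ (k : ℕ) → x k ≤ q k) ∧
    (∑ k ∈ univ.filter (fun k : Fin n => j ≤ (k : ℕ)), x k * w k) ≤ s ∧
    val = ∑ k ∈ univ.filter (fun k : Fin n => j ≤ (k : ℕ)), x k * v k}

lemma knapsackOpt_eq (n : ℕ) (w v q : Fin n → ℕ) (j s : ℕ) :
    knapsackOpt n w v q j s = sSup (kSet n w v q j s) := rfl

lemma kSet_nonempty (n : ℕ) (w v q : Fin n → ℕ) (j s : ℕ) :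
    (kSet n w v q j s).Nonempty :=
  ⟨0, 0, fun _ _ => Nat.zero_le _, by simp, by simp⟩

lemma kSet_bdd (n : ℕ) (w v q : Fin n → ℕ) (j s : ℕ) :
    BddAbove (kSet n w v q j s) := by
  refine ⟨∑ k, q k * v k, fun val hval => ?_⟩
  obtain ⟨x, hx, -, rfl⟩ := hval
  calc ∑ k ∈ univ.filter (fun k : Fin n => j ≤ (k : ℕ)), x k * v k
      ≤ ∑ k ∈ univ.filter (fun k : Fin n => j ≤ (k : ℕ)), q k * v k :=
        Finset.sum_le_sum (fun k hk => Nat.mul_le_mul_right _ (hx k (by simpa using hk)))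
    _ ≤ ∑ k, q k * v k := Finset.sum_le_sum_of_subset (filter_subset _ _)

lemma knapsackOpt_mem (n : ℕ) (w v q : Fin n → ℕ) (j s : ℕ) :
    knapsackOpt n w v q j s ∈ kSet n w v q j s :=
  Nat.sSup_mem (kSet_nonempty n w v q j s) (kSet_bdd n w v q j s)

lemma le_knapsackOpt {n : ℕ} {w v q : Fin n → ℕ} {j s val : ℕ}
    (h : val ∈ kSet n w v q j s) : val ≤ knapsackOpt n w v q j s :=
  le_csSup (kSet_bdd n w v q j s) h

lemma filter_split (n j : ℕ) (hj : j < n) :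
    univ.filter (fun k : Fin n => j ≤ (k : ℕ)) =
      insert (⟨j, hj⟩ : Fin n) (univ.filter (fun k : Fin n => j + 1 ≤ (k : ℕ))) := by
  ext k
  simp [Fin.ext_iff]
  omega

lemma notmem_filter (n j : ℕ) (hj : j < n) :
    (⟨j, hj⟩ : Fin n) ∉ univ.filter (fun k : Fin n => j + 1 ≤ (k : ℕ)) := by
  simp

lemma sum_split (n j : ℕ) (hj : j < n) (f : Fin n → ℕ) :
    ∑ k ∈ univ.filter (fun k : Fin n => j ≤ (k : ℕ)), f k =
      f ⟨j, hj⟩ + ∑ k ∈ univ.filter (fun k : Fin n => j + 1 ≤ (k : ℕ)), f k := by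
  rw [filter_split n j hj, Finset.sum_insert (notmem_filter n j hj)]

/-- The bounded-knapsack dynamic program satisfies the Bellman recursion:
`Opt(n, s) = 0`, and for `j < n`,
`Opt(j, s) = max_{d ≤ q j, d·w j ≤ s} (d·v j + Opt(j+1, s − d·w j))`. -/
theorem knapsack_bellman_recursion (n : ℕ) (w v q : Fin n → ℕ) :
    (∀ s : ℕ, knapsackOpt n w v q n s = 0) ∧
    (∀ (j : ℕ) (hj : j < n) (s : ℕ),
      knapsackOpt n w v q j s =
        sSup {val | ∃ d : ℕ, d ≤ q ⟨j, hj⟩ ∧ d * w ⟨j, hj⟩ ≤ s ∧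
          val = d * v ⟨j, hj⟩ + knapsackOpt n w v q (j + 1) (s - d * w ⟨j, hj⟩)}) := by
  constructor
  · intro s
    have hfil : (univ.filter (fun k : Fin n => n ≤ (k : ℕ))) = (∅ : Finset (Fin n)) := by
      ext k
      simp only [mem_filter, mem_univ, true_and, notMem_empty, iff_false]
      exact fun h => absurd k.isLt (by omega)
    have hset : kSet n w v q n s = {0} := by
      ext val
      constructor
      · rintro ⟨x, -, -, rfl⟩
        simp [hfil]
      · rintro rfl
        exact ⟨0, fun _ _ => Nat.zero_le _, by simp, by simp [hfil]⟩
    rw [knapsackOpt_eq, hset, csSup_singleton]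
  · intro j hj s
    have hOptle : ∀ s' : ℕ, knapsackOpt n w v q (j + 1) s' ≤ ∑ k, q k * v k := by
      intro s'
      apply csSup_le (kSet_nonempty n w v q (j + 1) s')
      rintro val ⟨x, hx, -, rfl⟩
      calc ∑ k ∈ univ.filter (fun k : Fin n => j + 1 ≤ (k : ℕ)), x k * v k
          ≤ ∑ k ∈ univ.filter (fun k : Fin n => j + 1 ≤ (k : ℕ)), q k * v k :=
            Finset.sum_le_sum (fun k hk => Nat.mul_le_mul_right _ (hx k (by simpa using hk)))
        _ ≤ ∑ k, q k * v k := Finset.sum_le_sum_of_subset (filter_subset _ _)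
    have hBne : Set.Nonempty {val | ∃ d : ℕ, d ≤ q ⟨j, hj⟩ ∧ d * w ⟨j, hj⟩ ≤ s ∧
        val = d * v ⟨j, hj⟩ + knapsackOpt n w v q (j + 1) (s - d * w ⟨j, hj⟩)} :=
      ⟨0 * v ⟨j, hj⟩ + knapsackOpt n w v q (j + 1) (s - 0 * w ⟨j, hj⟩),
        0, Nat.zero_le _, by simp, rfl⟩
    have hBbdd : BddAbove {val | ∃ d : ℕ, d ≤ q ⟨j, hj⟩ ∧ d * w ⟨j, hj⟩ ≤ s ∧
        val = d * v ⟨j, hj⟩ + knapsackOpt n w v q (j + 1) (s - d * w ⟨j, hj⟩)} := by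
      refine ⟨q ⟨j, hj⟩ * v ⟨j, hj⟩ + ∑ k, q k * v k, fun val hval => ?_⟩
      obtain ⟨d, hd, -, rfl⟩ := hval
      exact Nat.add_le_add (Nat.mul_le_mul_right _ hd) (hOptle _)
    rw [knapsackOpt_eq]
    apply le_antisymm
    · apply csSup_le (kSet_nonempty n w v q j s)
      rintro val ⟨x, hx, hw, rfl⟩
      have hwsplit := sum_split n j hj (fun k => x k * w k)
      have hvsplit := sum_split n j hj (fun k => x k * v k)
      have hdw : x ⟨j, hj⟩ * w ⟨j, hj⟩ ≤ s := by
        rw [hwsplit] at hw; omega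
      have htail : ∑ k ∈ univ.filter (fun k : Fin n => j + 1 ≤ (k : ℕ)), x k * w k
          ≤ s - x ⟨j, hj⟩ * w ⟨j, hj⟩ := by
        rw [hwsplit] at hw; omega
      have hmem : (∑ k ∈ univ.filter (fun k : Fin n => j + 1 ≤ (k : ℕ)), x k * v k)
          ∈ kSet n w v q (j + 1) (s - x ⟨j, hj⟩ * w ⟨j, hj⟩) :=
        ⟨x, fun k hk => hx k (by omega), htail, rfl⟩
      have h1 : ∑ k ∈ univ.filter (fun k : Fin n => j ≤ (k : ℕ)), x k * v k
          ≤ x ⟨j, hj⟩ * v ⟨j, hj⟩ +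
            knapsackOpt n w v q (j + 1) (s - x ⟨j, hj⟩ * w ⟨j, hj⟩) := by
        rw [hvsplit]
        exact Nat.add_le_add_left (le_knapsackOpt hmem) _
      exact le_trans h1 (le_csSup hBbdd ⟨x ⟨j, hj⟩, hx ⟨j, hj⟩ le_rfl, hdw, rfl⟩)
    · apply csSup_le hBne
      rintro val ⟨d, hd, hdw, rfl⟩
      obtain ⟨x', hx', hw', hval'⟩ := knapsackOpt_mem n w v q (j + 1) (s - d * w ⟨j, hj⟩)
      set x : Fin n → ℕ := Function.update x' ⟨j, hj⟩ d with hx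
      have hne : ∀ k ∈ univ.filter (fun k : Fin n => j + 1 ≤ (k : ℕ)),
          k ≠ (⟨j, hj⟩ : Fin n) := by
        intro k hk h
        rw [h] at hk
        simp only [mem_filter, mem_univ, true_and] at hk
        omega
      have hxw : ∑ k ∈ univ.filter (fun k : Fin n => j + 1 ≤ (k : ℕ)), x k * w k =
          ∑ k ∈ univ.filter (fun k : Fin n => j + 1 ≤ (k : ℕ)), x' k * w k :=
        Finset.sum_congr rfl (fun k hk => by rw [hx, Function.update_of_ne (hne k hk)])
      have hxv : ∑ k ∈ univ.filter (fun k : Fin n => j + 1 ≤ (k : ℕ)), x k * v k =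
          ∑ k ∈ univ.filter (fun k : Fin n => j + 1 ≤ (k : ℕ)), x' k * v k :=
        Finset.sum_congr rfl (fun k hk => by rw [hx, Function.update_of_ne (hne k hk)])
      have hxj : x ⟨j, hj⟩ = d := by rw [hx, Function.update_self]
      apply le_csSup (kSet_bdd n w v q j s)
      refine ⟨x, ?_, ?_, ?_⟩
      · intro k hk
        rcases eq_or_ne k ⟨j, hj⟩ with rfl | hne'
        · rw [hxj]; exact hd
        · rw [hx, Function.update_of_ne hne']
          exact hx' k (by
            have : (k : ℕ) ≠ j := fun h => hne' (Fin.ext h)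
            omega)
      · rw [sum_split n j hj (fun k => x k * w k)]
        rw [hxj, hxw]
        omega
      · rw [sum_split n j hj (fun k => x k * v k)]
        rw [hxj, hxv, ← hval']
end

section
/- Let m ≥ 1 be a natural number, L : Fin m → ℝ a family of nonnegative lengths, C : Fin m → Fin m → ℝ a symmetric traffic matrix with nonnegative entries, and π a permutation of Fin m. For indices i, j with π i < π j define the gap g(i, j) := Σ over k with π i < π k < π j of L k. Let T₁ ≤ T₂ ≤ … ≤ T_{m(m−1)/2} be the values { C i j : i < j } sorted in non-decreasing order (with multiplicity) and let Λ₁ ≤ Λ₂ ≤ … ≤ Λ_m be the lengths L sorted in non-decreasing order. Then, with Δ_k := k(k+1)/2, Σ over pairs (i, j) with π i < π j of C i j · g(i, j) ≥ Σ over k from 1 to m−1 of (Σ over l from Δ_{k−1}+1 to Δ_k of T_l) · (Σ over t from 1 to m−1−k of Λ_t). -/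
/-!
Write `λ_t` for the sorted lengths and `d(i, j) = π j - π i` for positional distances. A pair at
distance `d` has `d - 1` departments strictly between it, so its gap is at least
`∑_{t < d - 1} λ_t`. Exchanging the order of summation, the cost is therefore at least
`∑_t λ_t · (traffic over the pairs at distance ≥ t + 2)`, and there are `Δ_{m-2-t}` such pairs,
so that traffic is at least the sum of the `Δ_{m-2-t}` smallest traffics. Abel summation turns
the block form of the bound into exactly `∑_t λ_t · ∑_{l ≤ Δ_{m-2-t}} T_l`.
-/

open Finset

section SortedPrefix

variable {α : Type*} [AddCommMonoid α] [LinearOrder α] [IsOrderedAddMonoid α]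

theorem List.sum_take_cons_le_sum_take {a : α} {l : List α} (h : (a :: l).Pairwise (· ≤ ·))
    {n : ℕ} (hn : n ≤ l.length) : ((a :: l).take n).sum ≤ (l.take n).sum := by
  cases n with
  | zero => simp
  | succ n =>
    rw [List.take_succ_cons, List.sum_cons, List.sum_take_succ _ _ hn, add_comm]
    exact add_le_add_right ((List.pairwise_cons.mp h).1 _ (List.getElem_mem hn)) _

theorem List.Sublist.sum_take_le_sum {l l' : List α} (h : l.Sublist l')
    (hl' : l'.Pairwise (· ≤ ·)) : (l'.take l.length).sum ≤ l.sum := by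
  induction h with
  | slnil => simp
  | @cons l l' a h ih =>
    exact (sum_take_cons_le_sum_take hl' h.length_le).trans (ih (List.pairwise_cons.mp hl').2)
  | @cons_cons l l' a h ih =>
    rw [List.length_cons, List.take_succ_cons, List.sum_cons, List.sum_cons]
    exact add_le_add_right (ih (List.pairwise_cons.mp hl').2) a

theorem Multiset.sum_take_sort_le_sum_of_le {s t : Multiset α} (h : s ≤ t) :
    ((t.sort (· ≤ ·)).take (Multiset.card s)).sum ≤ s.sum := by
  have hsub : (s.sort (· ≤ ·)).Sublist (t.sort (· ≤ ·)) :=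
    List.sublist_of_subperm_of_pairwise
      (by rwa [← Multiset.coe_le, Multiset.sort_eq, Multiset.sort_eq])
      (Multiset.pairwise_sort _ _) (Multiset.pairwise_sort _ _)
  calc _ ≤ (s.sort (· ≤ ·)).sum := by
        simpa [Multiset.length_sort] using hsub.sum_take_le_sum (Multiset.pairwise_sort _ _)
    _ = s.sum := by rw [← Multiset.sum_coe, Multiset.sort_eq]

theorem Finset.sum_take_sort_le_sum_of_subset {ι : Type*} (f : ι → α) {s t : Finset ι}
    (h : s ⊆ t) : (((t.val.map f).sort (· ≤ ·)).take #s).sum ≤ ∑ i ∈ s, f i := by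
  simpa using Multiset.sum_take_sort_le_sum_of_le (Multiset.map_le_map (Finset.val_le_iff.mpr h))

end SortedPrefix

theorem sum_take_sort_symm_le_sum {α ι : Type*} [AddCommMonoid α] [LinearOrder α]
    [IsOrderedAddMonoid α] [LinearOrder ι] [Fintype ι] (C : ι → ι → α)
    (hC : ∀ i j, C i j = C j i) {Q : Finset (ι × ι)} (hQ : ∀ p ∈ Q, p.1 ≠ p.2 ∧ p.swap ∉ Q) :
    ((((univ.filter fun p : ι × ι => p.1 < p.2).val.map fun p => C p.1 p.2).sort
      (· ≤ ·)).take #Q).sum ≤ ∑ p ∈ Q, C p.1 p.2 := by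
  -- orient every pair increasingly; no pair of `Q` meets its own swap, so nothing collides
  let φ : ι × ι → ι × ι := fun p => if p.1 < p.2 then p else p.swap
  have hφ : ∀ p, φ p = p ∨ φ p = p.swap := fun p => by unfold φ; split_ifs <;> simp
  have hinj : Set.InjOn φ Q := by
    intro p hp q hq hpq
    rcases hφ p with h₁ | h₁ <;> rcases hφ q with h₂ | h₂ <;> rw [h₁, h₂] at hpq
    · exact hpq
    · exact absurd (hpq ▸ hp) (by simpa using (hQ q hq).2)
    · exact absurd (hpq ▸ hq) (by simpa [← hpq] using (hQ p hp).2)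
    · simpa using hpq
  have hsub : Q.image φ ⊆ univ.filter fun p : ι × ι => p.1 < p.2 := by
    simp only [subset_iff, mem_image, mem_filter, mem_univ, true_and, forall_exists_index, and_imp]
    rintro _ p hp rfl
    unfold φ; split_ifs with h
    · exact h
    · exact lt_of_le_of_ne (not_lt.mp h) (hQ p hp).1.symm
  have hsum : ∑ q ∈ Q.image φ, C q.1 q.2 = ∑ p ∈ Q, C p.1 p.2 := by
    rw [sum_image hinj]
    exact sum_congr rfl fun p _ => by rcases hφ p with h | h <;> rw [h]; exact hC _ _
  simpa [card_image_of_injOn hinj, hsum] using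
    sum_take_sort_le_sum_of_subset (fun p : ι × ι => C p.1 p.2) hsub

theorem List.sum_take_eq_sum_range_getD {α : Type*} [AddCommMonoid α] (l : List α) :
    ∀ n, (l.take n).sum = ∑ t ∈ Finset.range n, l.getD t 0
  | 0 => by simp
  | n + 1 => by
    rw [List.take_add_one, List.sum_append, Finset.sum_range_succ, sum_take_eq_sum_range_getD l n,
      List.getD_eq_getElem?_getD]
    cases l[n]? <;> simp

theorem List.getD_nonneg {α : Type*} [Zero α] [Preorder α] {l : List α} (h : ∀ x ∈ l, 0 ≤ x)
    (t : ℕ) : 0 ≤ l.getD t 0 := by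
  rw [List.getD_eq_getElem?_getD]
  cases hx : l[t]? with
  | none => exact le_rfl
  | some x => exact h x (List.mem_of_getElem? hx)

theorem List.sum_drop_take {α : Type*} [AddCommGroup α] (l : List α) {a b : ℕ} (h : a ≤ b) :
    ((l.take b).drop a).sum = (l.take b).sum - (l.take a).sum := by
  rw [eq_sub_iff_add_eq', ← List.sum_take_add_sum_drop (l.take b) a, List.take_take,
    min_eq_left h]

theorem Finset.sum_Icc_sub_pred {R : Type*} [AddCommGroup R] (A : ℕ → R) :
    ∀ r, ∑ k ∈ Icc 1 r, (A k - A (k - 1)) = A r - A 0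
  | 0 => by simp
  | r + 1 => by
    rw [sum_Icc_succ_top (by omega), sum_Icc_sub_pred A r, Nat.add_sub_cancel]
    abel

theorem Finset.sum_Icc_sub_pred_mul_sum_range {R : Type*} [CommRing R] (A a : ℕ → R) (n : ℕ) :
    ∑ k ∈ Icc 1 n, (A k - A (k - 1)) * ∑ t ∈ range (n - k), a t =
      ∑ t ∈ range n, (A (n - 1 - t) - A 0) * a t := by
  simp_rw [mul_sum]
  rw [sum_comm' (t' := range n) (s' := fun t => Icc 1 (n - 1 - t))
    (fun k t => by simp only [mem_Icc, mem_range]; omega)]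
  simp_rw [← sum_mul, sum_Icc_sub_pred]

theorem Equiv.Perm.card_filter_between {m : ℕ} (π : Equiv.Perm (Fin m)) (a b : Fin m) :
    #{k | a < π k ∧ π k < b} = (b : ℕ) - a - 1 := by
  rw [← Fin.card_Ioo, ← card_map π.toEmbedding]
  congr 1
  ext x
  simp

theorem Equiv.Perm.sum_take_sort_le_sum_between {α : Type*} [AddCommMonoid α] [LinearOrder α]
    [IsOrderedAddMonoid α] {m : ℕ} (π : Equiv.Perm (Fin m)) (L : Fin m → α) (i j : Fin m) :
    (((univ.val.map L).sort (· ≤ ·)).take ((π j : ℕ) - π i - 1)).sum ≤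
      ∑ k ∈ univ.filter (fun k => π i < π k ∧ π k < π j), L k := by
  rw [← π.card_filter_between]
  exact sum_take_sort_le_sum_of_subset L (subset_univ _)

theorem Finset.sum_range_add_one_sub (c : ℕ) :
    ∀ m, ∑ b ∈ range m, (b + 1 - c) = (m - c) * (m - c + 1) / 2
  | 0 => by simp
  | m + 1 => by
    rw [sum_range_succ, sum_range_add_one_sub c m]
    rcases le_or_gt c m with h | h
    · obtain ⟨k, rfl⟩ := Nat.exists_eq_add_of_le h
      have : (k + 1) * (k + 1 + 1) = k * (k + 1) + 2 * (k + 1) := by ring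
      simp only [Nat.add_sub_cancel_left, show c + k + 1 - c = k + 1 by omega, this]
      omega
    · simp [show m - c = 0 by omega, show m + 1 - c = 0 by omega]

theorem Fin.card_filter_add_le (m c : ℕ) :
    #{p : Fin m × Fin m | (p.1 : ℕ) + c ≤ p.2} = (m - c) * (m - c + 1) / 2 := by
  rw [card_filter, Fintype.sum_prod_type_right, ← sum_range_add_one_sub c m,
    ← Fin.sum_univ_eq_sum_range]
  refine sum_congr rfl fun b _ => ?_
  rw [← card_filter, ← min_eq_right (show (b : ℕ) + 1 - c ≤ m by omega),
    ← Fin.card_filter_val_lt]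
  congr 1
  ext a
  simp only [mem_filter, mem_univ, true_and]
  omega

def separatedPairs {m : ℕ} (π : Equiv.Perm (Fin m)) (c : ℕ) : Finset (Fin m × Fin m) :=
  {p | (π p.1 : ℕ) + c ≤ π p.2}

theorem card_separatedPairs {m : ℕ} (π : Equiv.Perm (Fin m)) (c : ℕ) :
    #(separatedPairs π c) = (m - c) * (m - c + 1) / 2 := by
  rw [← Fin.card_filter_add_le]
  exact card_equiv (π.prodCongr π) (by simp [separatedPairs])

theorem sum_take_sort_le_sum_separatedPairs {α : Type*} [AddCommMonoid α] [LinearOrder α]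
    [IsOrderedAddMonoid α] {m : ℕ} (π : Equiv.Perm (Fin m)) (C : Fin m → Fin m → α)
    (hC : ∀ i j, C i j = C j i) {c : ℕ} (hc : 1 ≤ c) :
    ((((univ.filter fun p : Fin m × Fin m => p.1 < p.2).val.map fun p => C p.1 p.2).sort
      (· ≤ ·)).take ((m - c) * (m - c + 1) / 2)).sum ≤
      ∑ p ∈ separatedPairs π c, C p.1 p.2 := by
  rw [← card_separatedPairs π c]
  refine sum_take_sort_symm_le_sum C hC fun p hp => ?_
  simp only [separatedPairs, mem_filter, mem_univ, true_and, Prod.fst_swap, Prod.snd_swap] at hp ⊢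
  exact ⟨fun h => by rw [h] at hp; omega, by omega⟩

theorem sum_mul_sum_range_eq_sum_separatedPairs {R : Type*} [CommSemiring R] {m : ℕ}
    (π : Equiv.Perm (Fin m)) (w : Fin m × Fin m → R) (a : ℕ → R) :
    ∑ p ∈ univ.filter (fun p : Fin m × Fin m => π p.1 < π p.2),
        w p * ∑ t ∈ range ((π p.2 : ℕ) - π p.1 - 1), a t =
      ∑ t ∈ range (m - 1), (∑ p ∈ separatedPairs π (t + 2), w p) * a t := by
  simp_rw [mul_sum, sum_mul]
  refine sum_comm' fun p t => ?_
  simp only [separatedPairs, mem_filter, mem_univ, true_and, mem_range, Fin.lt_def]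
  have := (π p.2).isLt
  omega

theorem srflp_lb_edge_general (m : ℕ) (L : Fin m → ℝ) (hL : ∀ i, 0 ≤ L i)
    (C : Fin m → Fin m → ℝ) (hCsymm : ∀ i j, C i j = C j i) (hC : ∀ i j, 0 ≤ C i j)
    (π : Equiv.Perm (Fin m))
    (g : Fin m → Fin m → ℝ)
    (hg : ∀ i j, π i < π j →
      g i j = ∑ k ∈ univ.filter (fun k => π i < π k ∧ π k < π j), L k)
    (T : List ℝ)
    (hT : T = Multiset.sort
      ((univ.filter (fun p : Fin m × Fin m => p.1 < p.2)).val.map fun p => C p.1 p.2) (· ≤ ·))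
    (Λ : List ℝ) (hΛ : Λ = Multiset.sort (Finset.univ.val.map L) (· ≤ ·)) :
    ∑ k ∈ Finset.Icc 1 (m - 1),
        ((T.take (k * (k + 1) / 2)).drop ((k - 1) * k / 2)).sum * (Λ.take (m - 1 - k)).sum ≤
      ∑ p ∈ univ.filter (fun p : Fin m × Fin m => π p.1 < π p.2), C p.1 p.2 * g p.1 p.2 := by
  set A : ℕ → ℝ := fun k => (T.take (k * (k + 1) / 2)).sum
  have hΛ_nonneg : ∀ t, 0 ≤ Λ.getD t 0 := List.getD_nonneg fun x hx => by
    obtain ⟨i, -, rfl⟩ := Multiset.mem_map.mp (hΛ ▸ Multiset.mem_sort _ |>.mp hx)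
    exact hL i
  have hblock : ∀ k ∈ Icc 1 (m - 1),
      ((T.take (k * (k + 1) / 2)).drop ((k - 1) * k / 2)).sum = A k - A (k - 1) := by
    intro k hk
    obtain ⟨j, rfl⟩ := Nat.exists_eq_add_of_le (mem_Icc.mp hk).1
    rw [List.sum_drop_take _
      (Nat.div_le_div_right (Nat.mul_le_mul (Nat.sub_le _ _) (Nat.le_succ _)))]
    simp [A, add_comm 1 j]
  have hgap : ∀ p ∈ univ.filter (fun p : Fin m × Fin m => π p.1 < π p.2),
      (Λ.take ((π p.2 : ℕ) - π p.1 - 1)).sum ≤ g p.1 p.2 := by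
    intro p hp
    rw [hg _ _ (mem_filter.mp hp).2, hΛ]
    exact π.sum_take_sort_le_sum_between L p.1 p.2
  have htraffic : ∀ t, A (m - 1 - 1 - t) ≤ ∑ p ∈ separatedPairs π (t + 2), C p.1 p.2 := by
    intro t
    simpa [A, hT, show m - (t + 2) = m - 1 - 1 - t by omega] using
      sum_take_sort_le_sum_separatedPairs π C hCsymm (c := t + 2) (by omega)
  calc _ = ∑ t ∈ range (m - 1), A (m - 1 - 1 - t) * Λ.getD t 0 := by
        rw [sum_congr rfl fun k hk => by rw [hblock k hk, List.sum_take_eq_sum_range_getD],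
          sum_Icc_sub_pred_mul_sum_range]
        simp [A]
    _ ≤ ∑ t ∈ range (m - 1), (∑ p ∈ separatedPairs π (t + 2), C p.1 p.2) * Λ.getD t 0 :=
        sum_le_sum fun t _ => mul_le_mul_of_nonneg_right (htraffic t) (hΛ_nonneg t)
    _ = ∑ p ∈ univ.filter (fun p : Fin m × Fin m => π p.1 < π p.2),
          C p.1 p.2 * (Λ.take ((π p.2 : ℕ) - π p.1 - 1)).sum := by
        simp_rw [List.sum_take_eq_sum_range_getD]
        exact (sum_mul_sum_range_eq_sum_separatedPairs π _ _).symm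
    _ ≤ _ := sum_le_sum fun p hp => mul_le_mul_of_nonneg_left (hgap p hp) (hC p.1 p.2)

/-- The `LB_edge` lower bound for the SRFLP: with gaps
`g i j = Σ_{π i < π k < π j} L k`, traffics `T` sorted non-decreasingly (with
multiplicity) over pairs `i < j`, lengths `Λ` sorted non-decreasingly, and
`Δ_k = k(k+1)/2`, the total traffic-weighted gap cost is at least
`Σ_{k=1}^{m−1} (Σ_{l=Δ_{k−1}+1}^{Δ_k} T_l) · (Σ_{t=1}^{m−1−k} Λ_t)`. -/
theorem srflp_lb_edge (m : ℕ) (hm : 1 ≤ m) (L : Fin m → ℝ) (hL : ∀ i, 0 ≤ L i)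
    (C : Fin m → Fin m → ℝ) (hCsymm : ∀ i j, C i j = C j i) (hC : ∀ i j, 0 ≤ C i j)
    (π : Equiv.Perm (Fin m))
    (g : Fin m → Fin m → ℝ)
    (hg : ∀ i j, π i < π j →
      g i j = ∑ k ∈ univ.filter (fun k => π i < π k ∧ π k < π j), L k)
    (T : List ℝ)
    (hT : T = Multiset.sort
      ((univ.filter (fun p : Fin m × Fin m => p.1 < p.2)).val.map fun p => C p.1 p.2) (· ≤ ·))
    (Λ : List ℝ) (hΛ : Λ = Multiset.sort (Finset.univ.val.map L) (· ≤ ·)) :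
    ∑ k ∈ Finset.Icc 1 (m - 1),
        ((T.take (k * (k + 1) / 2)).drop ((k - 1) * k / 2)).sum * (Λ.take (m - 1 - k)).sum ≤
      ∑ p ∈ univ.filter (fun p : Fin m × Fin m => π p.1 < π p.2), C p.1 p.2 * g p.1 p.2 :=
  srflp_lb_edge_general m L hL C hCsymm hC π g hg T hT Λ hΛ
end
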